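/- Fix a ≥ 0 and p̂ = (x̂,v̂) ∈ ℝⁿ×ℝⁿ, and let p(t) = p̂ + t·X^a_hb(p̂) be the zero-order-hold trajectory, i.e. x(t) = x̂ + t v̂ and v(t) = v̂ − t(2√μ v̂ + √μ_s∇f(x̂ + a v̂)). Then for every t ≥ 0, the function t ↦ V(p(t)) is differentiable and (d/dt)V(p(t)) + (√μ/4)V(p(t)) ≤ b^d_ET(p̂,t;a) ≤ b^d_ST(p̂,t;a). -/

import Mathlib

/-!
The zero-order-hold trajectory is affine in `t`, so the derivative of `V` along it is its value at
`t = 0` plus exactly `A_ET`. Co-coercivity of `∇f` at `x̂ + a v̂` bounds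
`(√μ/4)(V(p(t)) - V(p̂))` by `B_ET`. At `t = 0`, `(d/dt)V + (√μ/4)V` is bounded by `C_ET` using
strong convexity between `x̂ + a v̂` and `x*`, the Polyak–Łojasiewicz inequality
`‖∇f x̂‖² ≤ 2L (f x̂ - f x*)`, the two-sided bound `μ‖x̂ - x*‖ ≤ ‖∇f x̂‖ ≤ L‖x̂ - x*‖`, and
`‖v̂ - 2√μ (x̂ - x*)‖² ≥ 0`. The self-triggered bound follows from the event-triggered one by the
Lipschitz bound on `⟪∇f(x̂ + t v̂) - ∇f x̂, v̂⟫` and the descent lemma.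
-/

open scoped RealInnerProductSpace

noncomputable section

variable {n : ℕ}

local notation "E" => EuclideanSpace ℝ (Fin n)

/-- √μ_s := 1 + √(μs) -/
def ms (μ s : ℝ) : ℝ := 1 + Real.sqrt (μ * s)

/-- Lyapunov function V(x,v). -/
def Vf (μ s : ℝ) (f : E → ℝ) (xs x v : E) : ℝ :=
  ms μ s * (f x - f xs) + (1 / 4) * ‖v‖ ^ 2
    + (1 / 4) * ‖v + (2 * Real.sqrt μ) • (x - xs)‖ ^ 2

def AET (μ s : ℝ) (f' : E → E) (a : ℝ) (x v : E) (t : ℝ) : ℝ :=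
  2 * μ * t * ‖v‖ ^ 2 + ms μ s * (⟪f' (x + t • v) - f' x, v⟫
    + 2 * t * Real.sqrt μ * ⟪f' (x + a • v), v⟫ + t * ms μ s * ‖f' (x + a • v)‖ ^ 2)

def BET (μ L s : ℝ) (f : E → ℝ) (f' : E → E) (a : ℝ) (x v : E) (t : ℝ) : ℝ :=
  Real.sqrt μ * t ^ 2 / 16 * ‖(2 * Real.sqrt μ) • v + ms μ s • f' (x + a • v)‖ ^ 2
    - t * μ / 4 * ‖v‖ ^ 2
    + Real.sqrt μ * ms μ s / 4 * (f (x + t • v) - f x - t * ⟪v, f' (x + a • v)⟫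
        + t ^ 2 * ms μ s / 4 * ‖f' (x + a • v)‖ ^ 2
        - t * Real.sqrt μ / L * ‖f' (x + a • v)‖ ^ 2
        + t * Real.sqrt μ * ⟪a • v, f' (x + a • v)⟫)

def CET (μ L s : ℝ) (f : E → ℝ) (f' : E → E) (a : ℝ) (x v : E) : ℝ :=
  -(13 * Real.sqrt μ / 16) * ‖v‖ ^ 2 - μ ^ 2 * Real.sqrt s / (2 * L ^ 2) * ‖f' x‖ ^ 2
    + ms μ s * (-(3 * Real.sqrt μ / (8 * L)) * ‖f' x‖ ^ 2
        + Real.sqrt μ * (f x - f (x + a • v))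
        + Real.sqrt μ * ‖f' x‖ * ‖a • v‖
        - μ * Real.sqrt μ / 2 * ‖a • v‖ ^ 2
        - ⟪f' (x + a • v) - f' x, v⟫
        + Real.sqrt μ * ⟪f' (x + a • v), a • v⟫)

def AST (μ L s : ℝ) (f' : E → E) (a : ℝ) (x v : E) : ℝ :=
  2 * μ * ‖v‖ ^ 2 + ms μ s * (L * ‖v‖ ^ 2 + 2 * Real.sqrt μ * ⟪f' (x + a • v), v⟫
    + ms μ s * ‖f' (x + a • v)‖ ^ 2)

def BlST (μ L s : ℝ) (f' : E → E) (a : ℝ) (x v : E) : ℝ :=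
  Real.sqrt μ / 4 * (-(Real.sqrt μ) * ‖v‖ ^ 2
    + ms μ s * (⟪f' x - f' (x + a • v), v⟫
        - Real.sqrt μ / L * ‖f' (x + a • v)‖ ^ 2
        + Real.sqrt μ * ⟪a • v, f' (x + a • v)⟫))

def BqST (μ L s : ℝ) (f' : E → E) (a : ℝ) (x v : E) : ℝ :=
  Real.sqrt μ / 16 * ‖(2 * Real.sqrt μ) • v + ms μ s • f' (x + a • v)‖ ^ 2
    + Real.sqrt μ * ms μ s / 4 * (L / 2 * ‖v‖ ^ 2 + ms μ s / 4 * ‖f' (x + a • v)‖ ^ 2)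

/-- derivative-based event-triggered bound b^d_ET. -/
def bdET (μ L s : ℝ) (f : E → ℝ) (f' : E → E) (a : ℝ) (x v : E) (t : ℝ) : ℝ :=
  AET μ s f' a x v t + BET μ L s f f' a x v t + CET μ L s f f' a x v

/-- derivative-based self-triggered bound b^d_ST. -/
def bdST (μ L s : ℝ) (f : E → ℝ) (f' : E → E) (a : ℝ) (x v : E) (t : ℝ) : ℝ :=
  BqST μ L s f' a x v * t ^ 2 + (AST μ L s f' a x v + BlST μ L s f' a x v) * t
    + CET μ L s f f' a x v

section SmoothConvex

variable {F : Type*} [NormedAddCommGroup F] [InnerProductSpace ℝ F]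
  {f : F → ℝ} {f' : F → F} {L : ℝ} {xs : F}

theorem mul_norm_sub_le_norm_grad {μ : ℝ}
    (hsc : ∀ x y, f y - f x ≥ ⟪f' x, y - x⟫ + μ / 2 * ‖y - x‖ ^ 2) (hgs : f' xs = 0) (x : F) :
    μ * ‖x - xs‖ ≤ ‖f' x‖ := by
  have h1 := hsc xs x
  have h2 := hsc x xs
  rw [hgs, inner_zero_left] at h1
  rw [← neg_sub x xs, inner_neg_right, norm_neg] at h2
  have key : μ * ‖x - xs‖ * ‖x - xs‖ ≤ ‖f' x‖ * ‖x - xs‖ := by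
    rw [mul_assoc, ← sq]
    linarith [real_inner_le_norm (f' x) (x - xs)]
  rcases (norm_nonneg (x - xs)).eq_or_lt with h | h
  · rw [← h, mul_zero]; exact norm_nonneg _
  · exact le_of_mul_le_mul_right key h

theorem add_inner_le_of_strongConvex {μ : ℝ} (hμ : 0 ≤ μ)
    (hsc : ∀ x y, f y - f x ≥ ⟪f' x, y - x⟫ + μ / 2 * ‖y - x‖ ^ 2) (x y : F) :
    f x + ⟪f' x, y - x⟫ ≤ f y := by
  have := hsc x y
  have : 0 ≤ μ / 2 * ‖y - x‖ ^ 2 := by positivity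
  linarith

theorem inner_grad_sub_le_of_lipschitz (hlip : ∀ x y, ‖f' x - f' y‖ ≤ L * ‖x - y‖) (x u : F)
    {τ : ℝ} (hτ : 0 ≤ τ) :
    ⟪f' (x + τ • u) - f' x, u⟫ ≤ L * τ * ‖u‖ ^ 2 := calc
  _ ≤ ‖f' (x + τ • u) - f' x‖ * ‖u‖ := real_inner_le_norm _ _
  _ ≤ L * ‖τ • u‖ * ‖u‖ := by
    gcongr; simpa using hlip (x + τ • u) x
  _ = L * τ * ‖u‖ ^ 2 := by rw [norm_smul, Real.norm_of_nonneg hτ]; ring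

variable [CompleteSpace F]

theorem hasDerivAt_comp_add_smul (hgrad : ∀ x, HasGradientAt f (f' x) x) (x u : F) (t : ℝ) :
    HasDerivAt (fun τ : ℝ => f (x + τ • u)) ⟪f' (x + t • u), u⟫ t := by
  have hline : HasDerivAt (fun τ : ℝ => x + τ • u) u t := by
    simpa using ((hasDerivAt_id t).smul_const u).const_add x
  have h := (hgrad (x + t • u)).hasFDerivAt.comp_hasDerivAt t hline
  simp only [InnerProductSpace.toDual_apply_apply] at h
  exact h

theorem le_add_inner_add_sq_of_lipschitz_grad (hgrad : ∀ x, HasGradientAt f (f' x) x)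
    (hlip : ∀ x y, ‖f' x - f' y‖ ≤ L * ‖x - y‖) (x y : F) :
    f y ≤ f x + ⟪f' x, y - x⟫ + L / 2 * ‖y - x‖ ^ 2 := by
  set u := y - x
  let φ : ℝ → ℝ := fun τ => f (x + τ • u) - τ * ⟪f' x, u⟫ - L / 2 * ‖u‖ ^ 2 * τ ^ 2
  have hφ : ∀ τ, HasDerivAt φ (⟪f' (x + τ • u), u⟫ - ⟪f' x, u⟫ - L / 2 * ‖u‖ ^ 2 * (2 * τ)) τ :=
    fun τ => (((hasDerivAt_comp_add_smul hgrad x u τ).sub (hasDerivAt_mul_const _)).sub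
      ((hasDerivAt_pow 2 τ).const_mul _)).congr_deriv (by ring)
  have hanti : AntitoneOn φ (Set.Ici 0) := by
    refine antitoneOn_of_hasDerivWithinAt_nonpos (convex_Ici 0)
      (fun τ _ => (hφ τ).continuousAt.continuousWithinAt) (fun τ _ => (hφ τ).hasDerivWithinAt)
      fun τ hτ => ?_
    rw [interior_Ici, Set.mem_Ioi] at hτ
    have hgrowth := inner_grad_sub_le_of_lipschitz hlip x u hτ.le
    rw [inner_sub_left] at hgrowth
    linarith
  have h01 := hanti Set.self_mem_Ici (show (0 : ℝ) ≤ 1 from zero_le_one) zero_le_one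
  simp only [φ, u, zero_smul, add_zero, one_smul, zero_mul, sub_zero, one_mul, one_pow,
    mul_zero, zero_pow two_ne_zero, add_sub_cancel] at h01
  linarith

theorem add_inner_add_sq_norm_grad_sub_le (hgrad : ∀ x, HasGradientAt f (f' x) x)
    (hconv : ∀ x y, f x + ⟪f' x, y - x⟫ ≤ f y) (hlip : ∀ x y, ‖f' x - f' y‖ ≤ L * ‖x - y‖)
    (hL : 0 < L) (x y : F) :
    f x + ⟪f' x, y - x⟫ + ‖f' y - f' x‖ ^ 2 / (2 * L) ≤ f y := by
  set q := f' y - f' x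
  -- compare the tangent planes at `x` and at `y` in the point `y - q / L`
  have hx := hconv x (y - L⁻¹ • q)
  have hy := le_add_inner_add_sq_of_lipschitz_grad hgrad hlip y (y - L⁻¹ • q)
  have hq : ⟪f' y, q⟫ - ⟪f' x, q⟫ = ‖q‖ ^ 2 := by
    rw [← inner_sub_left, real_inner_self_eq_norm_sq]
  rw [sub_right_comm, inner_sub_right, real_inner_smul_right] at hx
  rw [sub_sub_cancel_left, inner_neg_right, norm_neg, norm_smul, real_inner_smul_right,
    Real.norm_of_nonneg (inv_nonneg.2 hL.le)] at hy
  have hL' : L ≠ 0 := hL.ne'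
  field_simp at hx hy ⊢
  linear_combination 2 * hx + hy - 2 * hq

theorem sq_norm_grad_div_le_inner_sub (hgrad : ∀ x, HasGradientAt f (f' x) x)
    (hconv : ∀ x y, f x + ⟪f' x, y - x⟫ ≤ f y) (hlip : ∀ x y, ‖f' x - f' y‖ ≤ L * ‖x - y‖)
    (hL : 0 < L) (hgs : f' xs = 0) (y : F) :
    ‖f' y‖ ^ 2 / L ≤ ⟪f' y, y - xs⟫ := by
  have h1 := add_inner_add_sq_norm_grad_sub_le hgrad hconv hlip hL xs y
  have h2 := add_inner_add_sq_norm_grad_sub_le hgrad hconv hlip hL y xs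
  rw [hgs, inner_zero_left, sub_zero] at h1
  rw [hgs, zero_sub, norm_neg, ← neg_sub y xs, inner_neg_right] at h2
  have hhalf : ‖f' y‖ ^ 2 / L = ‖f' y‖ ^ 2 / (2 * L) + ‖f' y‖ ^ 2 / (2 * L) := by
    field_simp; ring
  linarith

theorem sq_norm_grad_div_le_sub (hgrad : ∀ x, HasGradientAt f (f' x) x)
    (hconv : ∀ x y, f x + ⟪f' x, y - x⟫ ≤ f y) (hlip : ∀ x y, ‖f' x - f' y‖ ≤ L * ‖x - y‖)
    (hL : 0 < L) (hgs : f' xs = 0) (x : F) :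
    ‖f' x‖ ^ 2 / (2 * L) ≤ f x - f xs := by
  have h := add_inner_add_sq_norm_grad_sub_le hgrad hconv hlip hL xs x
  rw [hgs, inner_zero_left, sub_zero] at h
  linarith

end SmoothConvex

/-- `V` along the zero-order-hold trajectory `p(τ) = p̂ + τ X^a_hb(p̂)` from `p̂ = (x, v)`. -/
def Vzoh (μ s : ℝ) (f : E → ℝ) (f' : E → E) (xs : E) (a : ℝ) (x v : E) (τ : ℝ) : ℝ :=
  Vf μ s f xs (x + τ • v) (v - τ • ((2 * Real.sqrt μ) • v + ms μ s • f' (x + a • v)))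

/-- The derivative of `Vzoh` at `τ = 0`. -/
def VzohDerivZero (μ s : ℝ) (f' : E → E) (xs : E) (a : ℝ) (x v : E) : ℝ :=
  ms μ s * ⟪f' x - f' (x + a • v), v⟫ - Real.sqrt μ * ‖v‖ ^ 2
    - Real.sqrt μ * ms μ s * ⟪f' (x + a • v), x - xs⟫

section ZeroOrderHold

variable {μ L s : ℝ} {f : EuclideanSpace ℝ (Fin n) → ℝ}
  {f' : EuclideanSpace ℝ (Fin n) → EuclideanSpace ℝ (Fin n)} {xs x v : EuclideanSpace ℝ (Fin n)}
  {a : ℝ}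

theorem hasDerivAt_Vzoh (hμ : 0 ≤ μ) (hgrad : ∀ x, HasGradientAt f (f' x) x) (t : ℝ) :
    HasDerivAt (Vzoh μ s f f' xs a x v) (VzohDerivZero μ s f' xs a x v + AET μ s f' a x v t) t := by
  obtain ⟨m, hm, rfl⟩ : ∃ m, 0 ≤ m ∧ μ = m ^ 2 :=
    ⟨Real.sqrt μ, Real.sqrt_nonneg μ, (Real.sq_sqrt hμ).symm⟩
  unfold VzohDerivZero AET Vzoh Vf
  simp only [Real.sqrt_sq hm]
  set M := ms (m ^ 2) s
  set g := f' (x + a • v)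
  set w := (2 * m) • v + M • g
  have hv : HasDerivAt (fun τ : ℝ => v - τ • w) (-w) t := by
    simpa using ((hasDerivAt_id t).smul_const w).const_sub v
  have hu : HasDerivAt (fun τ : ℝ => v - τ • w + (2 * m) • (x + τ • v - xs))
      (-w + (2 * m) • v) t := by
    refine hv.add ?_
    simpa [Pi.smul_def] using
      ((((hasDerivAt_id t).smul_const v).const_add x).sub_const xs).const_smul (2 * m)
  have hV := (((hasDerivAt_comp_add_smul hgrad x v t).sub_const (f xs)).const_mul M).add
    (hv.norm_sq.const_mul (1 / 4 : ℝ)) |>.add (hu.norm_sq.const_mul (1 / 4 : ℝ))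
  refine hV.congr_deriv ?_
  simp only [w, ← real_inner_self_eq_norm_sq, inner_add_left, inner_add_right,
    inner_sub_left, inner_sub_right, inner_neg_right, real_inner_smul_left,
    real_inner_smul_right, real_inner_comm g v, real_inner_comm g x, real_inner_comm g xs]
  ring

theorem Vzoh_sub_le_BET (hμ : 0 ≤ μ) {t : ℝ} (ht : 0 ≤ t)
    (hcoco : ‖f' (x + a • v)‖ ^ 2 / L ≤ ⟪f' (x + a • v), x + a • v - xs⟫) :
    Real.sqrt μ / 4 * (Vzoh μ s f f' xs a x v t - Vzoh μ s f f' xs a x v 0)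
      ≤ BET μ L s f f' a x v t := by
  obtain ⟨m, hm, rfl⟩ : ∃ m, 0 ≤ m ∧ μ = m ^ 2 :=
    ⟨Real.sqrt μ, Real.sqrt_nonneg μ, (Real.sq_sqrt hμ).symm⟩
  have hM : 0 ≤ ms (m ^ 2) s := by unfold ms; positivity
  have hgap : 0 ≤ m * ms (m ^ 2) s / 4 * (t * m)
      * (⟪f' (x + a • v), x + a • v - xs⟫ - ‖f' (x + a • v)‖ ^ 2 / L) := by
    have := sub_nonneg.2 hcoco
    positivity
  simp only [Vzoh, Vf, BET, zero_smul, add_zero, sub_zero, Real.sqrt_sq hm]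
  simp only [← real_inner_self_eq_norm_sq, inner_add_left, inner_add_right,
    inner_sub_left, inner_sub_right, real_inner_smul_left, real_inner_smul_right,
    real_inner_comm (f' (x + a • v)) v, real_inner_comm (f' (x + a • v)) x,
    real_inner_comm (f' (x + a • v)) xs] at hgap ⊢
  linear_combination hgap

theorem VzohDerivZero_add_le_CET (hμ : 0 ≤ μ) (hL : 0 < L) (ha : 0 ≤ a)
    (hgrad : ∀ x, HasGradientAt f (f' x) x)
    (hconv : ∀ x y, f y - f x ≥ ⟪f' x, y - x⟫ + μ / 2 * ‖y - x‖ ^ 2)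
    (hlip : ∀ x y, ‖f' x - f' y‖ ≤ L * ‖x - y‖) (hgs : f' xs = 0) :
    VzohDerivZero μ s f' xs a x v + Real.sqrt μ / 4 * Vzoh μ s f f' xs a x v 0
      ≤ CET μ L s f f' a x v := by
  have hconv₀ := add_inner_le_of_strongConvex hμ hconv
  obtain ⟨m, hm, rfl⟩ : ∃ m, 0 ≤ m ∧ μ = m ^ 2 :=
    ⟨Real.sqrt μ, Real.sqrt_nonneg μ, (Real.sq_sqrt hμ).symm⟩
  have hM : ms (m ^ 2) s = 1 + m * Real.sqrt s := by
    rw [ms, Real.sqrt_mul (sq_nonneg m), Real.sqrt_sq hm]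
  have hM₀ : 0 ≤ 1 + m * Real.sqrt s := by positivity
  have hsc : 0 ≤ (1 + m * Real.sqrt s) * m * (f xs - f (x + a • v)
      - ⟪f' (x + a • v), xs - (x + a • v)⟫ - m ^ 2 / 2 * ‖xs - (x + a • v)‖ ^ 2) := by
    have := hconv (x + a • v) xs
    have : 0 ≤ f xs - f (x + a • v) - ⟪f' (x + a • v), xs - (x + a • v)⟫
      - m ^ 2 / 2 * ‖xs - (x + a • v)‖ ^ 2 := by linarith
    positivity
  have hpl : 0 ≤ (1 + m * Real.sqrt s) * (3 * m / 4) * (f x - f xs - ‖f' x‖ ^ 2 / (2 * L)) := by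
    have := sub_nonneg.2 (sq_norm_grad_div_le_sub hgrad hconv₀ hlip hL hgs x)
    positivity
  have hgrowth : 0 ≤ (1 + m * Real.sqrt s) * m * a * ‖v‖ * (‖f' x‖ - m ^ 2 * ‖x - xs‖) := by
    have := sub_nonneg.2 (mul_norm_sub_le_norm_grad hconv hgs x)
    positivity
  have hcs : 0 ≤ (1 + m * Real.sqrt s) * m ^ 3 * a * (⟪x - xs, v⟫ + ‖x - xs‖ * ‖v‖) := by
    have := neg_le_of_abs_le (abs_real_inner_le_norm (x - xs) v)
    have : 0 ≤ ⟪x - xs, v⟫ + ‖x - xs‖ * ‖v‖ := by linarith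
    positivity
  have hlipd : 0 ≤ m ^ 4 * Real.sqrt s / 2 * (‖x - xs‖ ^ 2 - ‖f' x‖ ^ 2 / L ^ 2) := by
    have h := hlip x xs
    rw [hgs, sub_zero] at h
    have : ‖f' x‖ ^ 2 / L ^ 2 ≤ ‖x - xs‖ ^ 2 := by
      rw [div_le_iff₀ (by positivity), ← mul_pow, mul_comm]
      exact pow_le_pow_left₀ (norm_nonneg _) h 2
    have := sub_nonneg.2 this
    positivity
  have hsq : 0 ≤ m / 16 * ‖v - (2 * m) • (x - xs)‖ ^ 2 := by positivity
  simp only [VzohDerivZero, Vzoh, Vf, CET, zero_smul, add_zero, sub_zero, hM, Real.sqrt_sq hm]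
  simp only [← real_inner_self_eq_norm_sq, inner_add_left, inner_add_right,
    inner_sub_left, inner_sub_right, real_inner_smul_left, real_inner_smul_right,
    real_inner_comm x v, real_inner_comm xs v, norm_smul, mul_pow, Real.norm_of_nonneg ha]
    at hsc hpl hgrowth hcs hlipd hsq ⊢
  linear_combination hsc + hpl + hgrowth + hcs + hlipd + hsq

theorem AET_le_mul_AST (hlip : ∀ x y, ‖f' x - f' y‖ ≤ L * ‖x - y‖) {t : ℝ} (ht : 0 ≤ t) :
    AET μ s f' a x v t ≤ t * AST μ L s f' a x v := by
  have hM : 0 ≤ ms μ s := by unfold ms; positivity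
  have h := mul_le_mul_of_nonneg_left (inner_grad_sub_le_of_lipschitz hlip x v ht) hM
  unfold AET AST
  linear_combination h

theorem BET_le_BqST_add_BlST (hμ : 0 ≤ μ) (hgrad : ∀ x, HasGradientAt f (f' x) x)
    (hlip : ∀ x y, ‖f' x - f' y‖ ≤ L * ‖x - y‖) {t : ℝ} (ht : 0 ≤ t) :
    BET μ L s f f' a x v t ≤ BqST μ L s f' a x v * t ^ 2 + BlST μ L s f' a x v * t := by
  have hM : 0 ≤ ms μ s := by unfold ms; positivity
  have hd := le_add_inner_add_sq_of_lipschitz_grad hgrad hlip x (x + t • v)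
  rw [add_sub_cancel_left, real_inner_smul_right, norm_smul, Real.norm_of_nonneg ht] at hd
  have h := mul_le_mul_of_nonneg_left hd (by positivity : 0 ≤ Real.sqrt μ * ms μ s / 4)
  unfold BET BqST BlST
  rw [inner_sub_left, real_inner_comm (f' (x + a • v)) v]
  linear_combination h + t * ‖v‖ ^ 2 / 4 * Real.sq_sqrt hμ

theorem bdET_le_bdST (hμ : 0 ≤ μ) (hgrad : ∀ x, HasGradientAt f (f' x) x)
    (hlip : ∀ x y, ‖f' x - f' y‖ ≤ L * ‖x - y‖) {t : ℝ} (ht : 0 ≤ t) :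
    bdET μ L s f f' a x v t ≤ bdST μ L s f f' a x v t := by
  have hA := AET_le_mul_AST (μ := μ) (s := s) (a := a) (x := x) (v := v) hlip ht
  have hB := BET_le_BqST_add_BlST (s := s) (a := a) (x := x) (v := v) hμ hgrad hlip ht
  unfold bdET bdST
  linarith

end ZeroOrderHold

theorem stmt_7_general {n : ℕ} (μ L s : ℝ) (hμ : 0 < μ) (hμL : μ ≤ L)
    (f : EuclideanSpace ℝ (Fin n) → ℝ)
    (f' : EuclideanSpace ℝ (Fin n) → EuclideanSpace ℝ (Fin n))
    (hgrad : ∀ x, HasGradientAt f (f' x) x)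
    (hconv : ∀ x y, f y - f x ≥ ⟪f' x, y - x⟫ + μ / 2 * ‖y - x‖ ^ 2)
    (hlip : ∀ x y, ‖f' x - f' y‖ ≤ L * ‖x - y‖)
    (xs : EuclideanSpace ℝ (Fin n)) (hgs : f' xs = 0)
    (a : ℝ) (ha : 0 ≤ a) (xh vh : EuclideanSpace ℝ (Fin n)) :
    ∀ t : ℝ, 0 ≤ t →
      DifferentiableAt ℝ (fun τ : ℝ => Vf μ s f xs (xh + τ • vh)
        (vh - τ • ((2 * Real.sqrt μ) • vh + ms μ s • f' (xh + a • vh)))) t ∧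
      deriv (fun τ : ℝ => Vf μ s f xs (xh + τ • vh)
        (vh - τ • ((2 * Real.sqrt μ) • vh + ms μ s • f' (xh + a • vh)))) t
        + Real.sqrt μ / 4 * Vf μ s f xs (xh + t • vh)
            (vh - t • ((2 * Real.sqrt μ) • vh + ms μ s • f' (xh + a • vh)))
        ≤ bdET μ L s f f' a xh vh t ∧
      bdET μ L s f f' a xh vh t ≤ bdST μ L s f f' a xh vh t := by
  intro t ht
  have hL : 0 < L := hμ.trans_le hμL
  have hV := hasDerivAt_Vzoh (s := s) (xs := xs) (a := a) (x := xh) (v := vh) hμ.le hgrad t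
  refine ⟨hV.differentiableAt, ?_, bdET_le_bdST hμ.le hgrad hlip ht⟩
  show deriv (Vzoh μ s f f' xs a xh vh) t + Real.sqrt μ / 4 * Vzoh μ s f f' xs a xh vh t ≤ _
  have hB := Vzoh_sub_le_BET (L := L) (s := s) (f := f) (a := a) (x := xh) (v := vh) hμ.le ht
    (sq_norm_grad_div_le_inner_sub hgrad (add_inner_le_of_strongConvex hμ.le hconv) hlip hL hgs _)
  have hC := VzohDerivZero_add_le_CET (s := s) (x := xh) (v := vh) hμ.le hL ha hgrad hconv hlip hgs
  rw [hV.deriv, bdET]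
  linarith

/-- along the zero-order-hold trajectory p(t) = p̂ + t X^a_hb(p̂),
t ↦ V(p(t)) is differentiable and
(d/dt)V(p(t)) + (√μ/4)V(p(t)) ≤ b^d_ET(p̂,t;a) ≤ b^d_ST(p̂,t;a) for t ≥ 0. -/
theorem stmt_7 {n : ℕ} (μ L s : ℝ) (hμ : 0 < μ) (hμL : μ ≤ L) (hs : 0 < s)
    (f : EuclideanSpace ℝ (Fin n) → ℝ)
    (f' : EuclideanSpace ℝ (Fin n) → EuclideanSpace ℝ (Fin n))
    (hgrad : ∀ x, HasGradientAt f (f' x) x)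
    (hconv : ∀ x y, f y - f x ≥ ⟪f' x, y - x⟫ + μ / 2 * ‖y - x‖ ^ 2)
    (hlip : ∀ x y, ‖f' x - f' y‖ ≤ L * ‖x - y‖)
    (xs : EuclideanSpace ℝ (Fin n)) (hmin : ∀ x, f xs ≤ f x) (hgs : f' xs = 0)
    (a : ℝ) (ha : 0 ≤ a) (xh vh : EuclideanSpace ℝ (Fin n)) :
    ∀ t : ℝ, 0 ≤ t →
      DifferentiableAt ℝ (fun τ : ℝ => Vf μ s f xs (xh + τ • vh)
        (vh - τ • ((2 * Real.sqrt μ) • vh + ms μ s • f' (xh + a • vh)))) t ∧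
      deriv (fun τ : ℝ => Vf μ s f xs (xh + τ • vh)
        (vh - τ • ((2 * Real.sqrt μ) • vh + ms μ s • f' (xh + a • vh)))) t
        + Real.sqrt μ / 4 * Vf μ s f xs (xh + t • vh)
            (vh - t • ((2 * Real.sqrt μ) • vh + ms μ s • f' (xh + a • vh)))
        ≤ bdET μ L s f f' a xh vh t ∧
      bdET μ L s f f' a xh vh t ≤ bdST μ L s f f' a xh vh t :=
  stmt_7_general μ L s hμ hμL f f' hgrad hconv hlip xs hgs a ha xh vh

end
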